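/- arXiv:1810.05542 — 2 statements merged into one kernel-verified Lean document; each statement's English description precedes it below -/
import Mathlib

section
/- The composition is the greatest lower bound with respect to simulation: let Σ, Σ₁, Σ₂ be systems in driving variable form with the same external space W. If Σ ≼ Σ₁ and Σ ≼ Σ₂, then Σ ≼ Σ₁ ∘ Σ₂. -/
/-- A linear system in driving variable form `ẋ = A x + G d`, `w = C x`, `0 = H x`. -/
structure DVSystem (X W D Y : Type)
    [AddCommGroup X] [Module ℝ X] [AddCommGroup W] [Module ℝ W]
    [AddCommGroup D] [Module ℝ D] [AddCommGroup Y] [Module ℝ Y] where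
  A : X →ₗ[ℝ] X
  G : D →ₗ[ℝ] X
  C : X →ₗ[ℝ] W
  H : X →ₗ[ℝ] Y

namespace DVSystem

section basic

variable {X W D Y : Type}
  [AddCommGroup X] [Module ℝ X] [AddCommGroup W] [Module ℝ W]
  [AddCommGroup D] [Module ℝ D] [AddCommGroup Y] [Module ℝ Y]

/-- A subspace `U` is consistent-admissible if `A U ⊆ U + im G` and `U ⊆ ker H`. -/
def Admissible (P : DVSystem X W D Y) (U : Submodule ℝ X) : Prop :=
  U.map P.A ≤ U ⊔ LinearMap.range P.G ∧ U ≤ LinearMap.ker P.H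

/-- The consistent subspace `V*`: the largest consistent-admissible subspace. -/
def V (P : DVSystem X W D Y) : Submodule ℝ X :=
  sSup {U | P.Admissible U}

end basic

section sim

variable {W : Type} [AddCommGroup W] [Module ℝ W]
variable {X₁ D₁ Y₁ : Type} [AddCommGroup X₁] [Module ℝ X₁]
  [AddCommGroup D₁] [Module ℝ D₁] [AddCommGroup Y₁] [Module ℝ Y₁]
variable {X₂ D₂ Y₂ : Type} [AddCommGroup X₂] [Module ℝ X₂]
  [AddCommGroup D₂] [Module ℝ D₂] [AddCommGroup Y₂] [Module ℝ Y₂]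

/-- Items (i)-(ii) of the (algebraic) definition of a simulation relation. -/
def SimConds (P₁ : DVSystem X₁ W D₁ Y₁) (P₂ : DVSystem X₂ W D₂ Y₂)
    (S : Submodule ℝ (X₁ × X₂)) : Prop :=
  ∀ x₁ x₂, (x₁, x₂) ∈ S →
    (∀ d₁ : D₁, P₁.A x₁ + P₁.G d₁ ∈ P₁.V →
      ∃ d₂ : D₂, P₂.A x₂ + P₂.G d₂ ∈ P₂.V ∧
        (P₁.A x₁ + P₁.G d₁, P₂.A x₂ + P₂.G d₂) ∈ S) ∧
    P₁.C x₁ = P₂.C x₂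

/-- `S` is a simulation relation of `P₁` by `P₂`. -/
def IsSimRel (P₁ : DVSystem X₁ W D₁ Y₁) (P₂ : DVSystem X₂ W D₂ Y₂)
    (S : Submodule ℝ (X₁ × X₂)) : Prop :=
  S.map (LinearMap.fst ℝ X₁ X₂) ≤ P₁.V ∧ S.map (LinearMap.snd ℝ X₁ X₂) ≤ P₂.V ∧
    SimConds P₁ P₂ S

/-- `S` is a full simulation relation of `P₁` by `P₂`: in addition `π₁(S) = V₁*`. -/
def IsFullSimRel (P₁ : DVSystem X₁ W D₁ Y₁) (P₂ : DVSystem X₂ W D₂ Y₂)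
    (S : Submodule ℝ (X₁ × X₂)) : Prop :=
  IsSimRel P₁ P₂ S ∧ S.map (LinearMap.fst ℝ X₁ X₂) = P₁.V

/-- `P₁ ≼ P₂`: `P₁` is simulated by `P₂`. -/
def Simulates (P₁ : DVSystem X₁ W D₁ Y₁) (P₂ : DVSystem X₂ W D₂ Y₂) : Prop :=
  ∃ S : Submodule ℝ (X₁ × X₂), IsFullSimRel P₁ P₂ S

/-- The composition `P₁ ∘ P₂` obtained by sharing the external variable `w₁ = w₂`. -/
noncomputable def comp (P₁ : DVSystem X₁ W D₁ Y₁) (P₂ : DVSystem X₂ W D₂ Y₂) :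
    DVSystem (X₁ × X₂) W (D₁ × D₂) (Y₁ × Y₂ × W) where
  A := P₁.A.prodMap P₂.A
  G := P₁.G.prodMap P₂.G
  C := (1/2 : ℝ) • (P₁.C ∘ₗ LinearMap.fst ℝ X₁ X₂ + P₂.C ∘ₗ LinearMap.snd ℝ X₁ X₂)
  H := (P₁.H ∘ₗ LinearMap.fst ℝ X₁ X₂).prod
    ((P₂.H ∘ₗ LinearMap.snd ℝ X₁ X₂).prod
      (P₁.C ∘ₗ LinearMap.fst ℝ X₁ X₂ - P₂.C ∘ₗ LinearMap.snd ℝ X₁ X₂))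

end sim

section relcomp

variable {X₁ X₂ X₃ : Type} [AddCommGroup X₁] [Module ℝ X₁]
  [AddCommGroup X₂] [Module ℝ X₂] [AddCommGroup X₃] [Module ℝ X₃]

/-- Composition of linear relations:
`{(x₁, x₃) | ∃ x₂, (x₁, x₂) ∈ S₁₂ ∧ (x₂, x₃) ∈ S₂₃}`. -/
def relComp (S₁₂ : Submodule ℝ (X₁ × X₂)) (S₂₃ : Submodule ℝ (X₂ × X₃)) :
    Submodule ℝ (X₁ × X₃) where
  carrier := {p | ∃ x₂, (p.1, x₂) ∈ S₁₂ ∧ (x₂, p.2) ∈ S₂₃}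
  zero_mem' := ⟨0, S₁₂.zero_mem, S₂₃.zero_mem⟩
  add_mem' := by
    rintro a b ⟨y, hy1, hy2⟩ ⟨z, hz1, hz2⟩
    exact ⟨y + z, S₁₂.add_mem hy1 hz1, S₂₃.add_mem hy2 hz2⟩
  smul_mem' := by
    rintro c a ⟨y, h1, h2⟩
    exact ⟨c • y, S₁₂.smul_mem c h1, S₂₃.smul_mem c h2⟩

/-- The pairing `{(x, (x₁, x₂)) | (x, x₁) ∈ S₁ ∧ (x, x₂) ∈ S₂}` of two relations. -/
def pairRel (S₁ : Submodule ℝ (X₁ × X₂)) (S₂ : Submodule ℝ (X₁ × X₃)) :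
    Submodule ℝ (X₁ × X₂ × X₃) where
  carrier := {p | (p.1, p.2.1) ∈ S₁ ∧ (p.1, p.2.2) ∈ S₂}
  zero_mem' := ⟨S₁.zero_mem, S₂.zero_mem⟩
  add_mem' := by
    rintro a b ⟨ha1, ha2⟩ ⟨hb1, hb2⟩
    exact ⟨S₁.add_mem ha1 hb1, S₂.add_mem ha2 hb2⟩
  smul_mem' := by
    rintro c a ⟨h1, h2⟩
    exact ⟨S₁.smul_mem c h1, S₂.smul_mem c h2⟩

end relcomp

section contract

variable {W : Type} [AddCommGroup W] [Module ℝ W]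
variable {X D Y Xa Da Ya Xg Dg Yg : Type}
  [AddCommGroup X] [Module ℝ X] [AddCommGroup D] [Module ℝ D]
  [AddCommGroup Y] [Module ℝ Y]
  [AddCommGroup Xa] [Module ℝ Xa] [AddCommGroup Da] [Module ℝ Da]
  [AddCommGroup Ya] [Module ℝ Ya]
  [AddCommGroup Xg] [Module ℝ Xg] [AddCommGroup Dg] [Module ℝ Dg]
  [AddCommGroup Yg] [Module ℝ Yg]

/-- `Sys` implements the contract `(Ass, Gar)` if `E ∘ Sys ≼ Gar` for every
compatible environment `E`, i.e., every environment with `E ≼ Ass`. -/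
def Implements (Sys : DVSystem X W D Y)
    (Ass : DVSystem Xa W Da Ya) (Gar : DVSystem Xg W Dg Yg) : Prop :=
  ∀ (Xe De Ye : Type) [AddCommGroup Xe] [Module ℝ Xe] [FiniteDimensional ℝ Xe]
    [AddCommGroup De] [Module ℝ De] [FiniteDimensional ℝ De]
    [AddCommGroup Ye] [Module ℝ Ye] [FiniteDimensional ℝ Ye]
    (E : DVSystem Xe W De Ye),
    Simulates E Ass → Simulates (comp E Sys) Gar

end contract

section refine

variable {W : Type} [AddCommGroup W] [Module ℝ W]
variable {Xa Da Ya Xg Dg Yg Xa' Da' Ya' Xg' Dg' Yg' : Type}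
  [AddCommGroup Xa] [Module ℝ Xa] [AddCommGroup Da] [Module ℝ Da]
  [AddCommGroup Ya] [Module ℝ Ya]
  [AddCommGroup Xg] [Module ℝ Xg] [AddCommGroup Dg] [Module ℝ Dg]
  [AddCommGroup Yg] [Module ℝ Yg]
  [AddCommGroup Xa'] [Module ℝ Xa'] [AddCommGroup Da'] [Module ℝ Da']
  [AddCommGroup Ya'] [Module ℝ Ya']
  [AddCommGroup Xg'] [Module ℝ Xg'] [AddCommGroup Dg'] [Module ℝ Dg']
  [AddCommGroup Yg'] [Module ℝ Yg']

/-- The contract `(Ass', Gar')` refines the contract `(Ass, Gar)`: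
`Ass ≼ Ass'` and `Ass ∘ Gar' ≼ Gar`. -/
def Refines (Ass' : DVSystem Xa' W Da' Ya') (Gar' : DVSystem Xg' W Dg' Yg')
    (Ass : DVSystem Xa W Da Ya) (Gar : DVSystem Xg W Dg Yg) : Prop :=
  Simulates Ass Ass' ∧ Simulates (comp Ass Gar') Gar

end refine

/-! The witness is the pairing `S = {(x, (x₁, x₂)) | (x, x₁) ∈ S₁, (x, x₂) ∈ S₂}` of the two
full simulation relations. Its image in `X₁ × X₂` is admissible for `Σ₁ ∘ Σ₂`: every move of
`Σ` is matched in both `S₁` and `S₂`, and `C₁ x₁ = C x = C₂ x₂`. Hence that image lies in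
`V∘,*`, which is exactly what makes the matched moves legal in `Σ₁ ∘ Σ₂`. -/

section consistent

variable {X W D Y : Type}
  [AddCommGroup X] [Module ℝ X] [AddCommGroup W] [Module ℝ W]
  [AddCommGroup D] [Module ℝ D] [AddCommGroup Y] [Module ℝ Y]
  (P : DVSystem X W D Y)

lemma map_A_le_sup_range_G_iff {U : Submodule ℝ X} :
    U.map P.A ≤ U ⊔ LinearMap.range P.G ↔ ∀ x ∈ U, ∃ d, P.A x + P.G d ∈ U := by
  constructor
  · intro h x hx
    obtain ⟨u, hu, _, ⟨d, rfl⟩, hAx⟩ :=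
      Submodule.mem_sup.mp (h (Submodule.mem_map_of_mem hx))
    refine ⟨-d, ?_⟩
    rwa [map_neg, ← hAx, add_neg_cancel_right]
  · rintro h _ ⟨x, hx, rfl⟩
    obtain ⟨d, hd⟩ := h x hx
    exact Submodule.mem_sup.mpr
      ⟨_, hd, P.G (-d), ⟨-d, rfl⟩, by rw [map_neg, add_neg_cancel_right]⟩

lemma admissible_V : P.Admissible P.V := by
  constructor
  · rw [V, sSup_eq_iSup', Submodule.map_iSup]
    exact iSup_le fun U => U.2.1.trans (sup_le_sup_right (le_iSup _ U) _)
  · exact sSup_le fun U hU => hU.2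

lemma le_V_of_admissible {U : Submodule ℝ X} (hU : P.Admissible U) : U ≤ P.V :=
  le_sSup hU

lemma exists_A_add_G_mem_V {x : X} (hx : x ∈ P.V) : ∃ d, P.A x + P.G d ∈ P.V :=
  (P.map_A_le_sup_range_G_iff.mp P.admissible_V.1) x hx

lemma V_le_ker_H : P.V ≤ LinearMap.ker P.H :=
  P.admissible_V.2

end consistent

section comp

variable {W : Type} [AddCommGroup W] [Module ℝ W]
variable {X₁ D₁ Y₁ : Type} [AddCommGroup X₁] [Module ℝ X₁]
  [AddCommGroup D₁] [Module ℝ D₁] [AddCommGroup Y₁] [Module ℝ Y₁]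
variable {X₂ D₂ Y₂ : Type} [AddCommGroup X₂] [Module ℝ X₂]
  [AddCommGroup D₂] [Module ℝ D₂] [AddCommGroup Y₂] [Module ℝ Y₂]
variable (P₁ : DVSystem X₁ W D₁ Y₁) (P₂ : DVSystem X₂ W D₂ Y₂)

lemma comp_C_apply_of_eq {x₁ : X₁} {x₂ : X₂} {w : W} (h₁ : P₁.C x₁ = w) (h₂ : P₂.C x₂ = w) :
    (comp P₁ P₂).C (x₁, x₂) = w := by
  simp only [comp, LinearMap.smul_apply, LinearMap.add_apply, LinearMap.comp_apply,
    LinearMap.fst_apply, LinearMap.snd_apply, h₁, h₂]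
  rw [← two_smul ℝ w, smul_smul]
  norm_num

lemma mem_ker_comp_H_iff {x₁ : X₁} {x₂ : X₂} :
    (x₁, x₂) ∈ LinearMap.ker (comp P₁ P₂).H ↔
      P₁.H x₁ = 0 ∧ P₂.H x₂ = 0 ∧ P₁.C x₁ = P₂.C x₂ := by
  simp [comp, sub_eq_zero]

end comp

section pairing

variable {X₁ X₂ X₃ : Type} [AddCommGroup X₁] [Module ℝ X₁]
  [AddCommGroup X₂] [Module ℝ X₂] [AddCommGroup X₃] [Module ℝ X₃]

lemma map_fst_pairRel (S₁ : Submodule ℝ (X₁ × X₂)) (S₂ : Submodule ℝ (X₁ × X₃)) :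
    (pairRel S₁ S₂).map (LinearMap.fst ℝ X₁ (X₂ × X₃)) =
      S₁.map (LinearMap.fst ℝ X₁ X₂) ⊓ S₂.map (LinearMap.fst ℝ X₁ X₃) := by
  ext x
  simp [pairRel]

end pairing

section simulation

variable {W : Type} [AddCommGroup W] [Module ℝ W]
variable {X D Y : Type} [AddCommGroup X] [Module ℝ X]
  [AddCommGroup D] [Module ℝ D] [AddCommGroup Y] [Module ℝ Y]
variable {X₁ D₁ Y₁ : Type} [AddCommGroup X₁] [Module ℝ X₁]
  [AddCommGroup D₁] [Module ℝ D₁] [AddCommGroup Y₁] [Module ℝ Y₁]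
variable {X₂ D₂ Y₂ : Type} [AddCommGroup X₂] [Module ℝ X₂]
  [AddCommGroup D₂] [Module ℝ D₂] [AddCommGroup Y₂] [Module ℝ Y₂]
variable {P : DVSystem X W D Y} {P₁ : DVSystem X₁ W D₁ Y₁} {P₂ : DVSystem X₂ W D₂ Y₂}
  {S₁ : Submodule ℝ (X × X₁)} {S₂ : Submodule ℝ (X × X₂)}

lemma SimConds.exists_succ_mem_pairRel (h₁ : SimConds P P₁ S₁) (h₂ : SimConds P P₂ S₂)
    {x : X} {x₁ : X₁} {x₂ : X₂} (hx : (x, (x₁, x₂)) ∈ pairRel S₁ S₂)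
    {d : D} (hd : P.A x + P.G d ∈ P.V) :
    ∃ d' : D₁ × D₂,
      (P.A x + P.G d, (comp P₁ P₂).A (x₁, x₂) + (comp P₁ P₂).G d') ∈ pairRel S₁ S₂ := by
  obtain ⟨d₁, -, hS₁⟩ := (h₁ x x₁ hx.1).1 d hd
  obtain ⟨d₂, -, hS₂⟩ := (h₂ x x₂ hx.2).1 d hd
  exact ⟨(d₁, d₂), hS₁, hS₂⟩

lemma SimConds.C_eq_comp_C_of_mem_pairRel (h₁ : SimConds P P₁ S₁) (h₂ : SimConds P P₂ S₂)
    {x : X} {x₁ : X₁} {x₂ : X₂} (hx : (x, (x₁, x₂)) ∈ pairRel S₁ S₂) :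
    P.C x = (comp P₁ P₂).C (x₁, x₂) :=
  (comp_C_apply_of_eq P₁ P₂ (h₁ x x₁ hx.1).2.symm (h₂ x x₂ hx.2).2.symm).symm

lemma IsSimRel.admissible_map_snd_pairRel (h₁ : IsSimRel P P₁ S₁) (h₂ : IsSimRel P P₂ S₂) :
    (comp P₁ P₂).Admissible ((pairRel S₁ S₂).map (LinearMap.snd ℝ X (X₁ × X₂))) := by
  constructor
  · rw [map_A_le_sup_range_G_iff]
    rintro _ ⟨⟨x, x₁, x₂⟩, hx, rfl⟩
    obtain ⟨d, hd⟩ := P.exists_A_add_G_mem_V (h₁.1 (Submodule.mem_map_of_mem hx.1))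
    obtain ⟨d', hd'⟩ := h₁.2.2.exists_succ_mem_pairRel h₂.2.2 hx hd
    exact ⟨d', _, hd', rfl⟩
  · rintro _ ⟨⟨x, x₁, x₂⟩, hx, rfl⟩
    exact (mem_ker_comp_H_iff P₁ P₂).mpr
      ⟨P₁.V_le_ker_H (h₁.2.1 (Submodule.mem_map_of_mem hx.1)),
        P₂.V_le_ker_H (h₂.2.1 (Submodule.mem_map_of_mem hx.2)),
        (h₁.2.2 x x₁ hx.1).2.symm.trans (h₂.2.2 x x₂ hx.2).2⟩

lemma IsSimRel.pair (h₁ : IsSimRel P P₁ S₁) (h₂ : IsSimRel P P₂ S₂) :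
    IsSimRel P (comp P₁ P₂) (pairRel S₁ S₂) := by
  have hV : (pairRel S₁ S₂).map (LinearMap.snd ℝ X (X₁ × X₂)) ≤ (comp P₁ P₂).V :=
    le_V_of_admissible _ (h₁.admissible_map_snd_pairRel h₂)
  refine ⟨?_, hV, ?_⟩
  · rw [map_fst_pairRel]
    exact inf_le_left.trans h₁.1
  · rintro x ⟨x₁, x₂⟩ hx
    refine ⟨fun d hd => ?_, h₁.2.2.C_eq_comp_C_of_mem_pairRel h₂.2.2 hx⟩
    obtain ⟨d', hd'⟩ := h₁.2.2.exists_succ_mem_pairRel h₂.2.2 hx hd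
    exact ⟨d', hV (Submodule.mem_map_of_mem hd'), hd'⟩

lemma IsFullSimRel.pair (h₁ : IsFullSimRel P P₁ S₁) (h₂ : IsFullSimRel P P₂ S₂) :
    IsFullSimRel P (comp P₁ P₂) (pairRel S₁ S₂) :=
  ⟨h₁.1.pair h₂.1, by rw [map_fst_pairRel, h₁.2, h₂.2, inf_idem]⟩

end simulation

end DVSystem

open DVSystem

theorem simulates_comp_of_simulates_general {W : Type} [AddCommGroup W] [Module ℝ W]
    {X₁ D₁ Y₁ : Type} [AddCommGroup X₁] [Module ℝ X₁]
    [AddCommGroup D₁] [Module ℝ D₁]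
    [AddCommGroup Y₁] [Module ℝ Y₁]
    {X₂ D₂ Y₂ : Type} [AddCommGroup X₂] [Module ℝ X₂]
    [AddCommGroup D₂] [Module ℝ D₂]
    [AddCommGroup Y₂] [Module ℝ Y₂]
    {X D Y : Type} [AddCommGroup X] [Module ℝ X]
    [AddCommGroup D] [Module ℝ D]
    [AddCommGroup Y] [Module ℝ Y]
    (P : DVSystem X W D Y) (P₁ : DVSystem X₁ W D₁ Y₁) (P₂ : DVSystem X₂ W D₂ Y₂)
    (h₁ : Simulates P P₁) (h₂ : Simulates P P₂) :
    Simulates P (comp P₁ P₂) := by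
  obtain ⟨S₁, hS₁⟩ := h₁
  obtain ⟨S₂, hS₂⟩ := h₂
  exact ⟨pairRel S₁ S₂, hS₁.pair hS₂⟩

/-- The composition is a greatest lower bound: if `Σ ≼ Σ₁` and `Σ ≼ Σ₂`
then `Σ ≼ Σ₁ ∘ Σ₂`. -/
theorem simulates_comp_of_simulates {W : Type} [AddCommGroup W] [Module ℝ W] [FiniteDimensional ℝ W]
    {X₁ D₁ Y₁ : Type} [AddCommGroup X₁] [Module ℝ X₁] [FiniteDimensional ℝ X₁]
    [AddCommGroup D₁] [Module ℝ D₁] [FiniteDimensional ℝ D₁]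
    [AddCommGroup Y₁] [Module ℝ Y₁] [FiniteDimensional ℝ Y₁]
    {X₂ D₂ Y₂ : Type} [AddCommGroup X₂] [Module ℝ X₂] [FiniteDimensional ℝ X₂]
    [AddCommGroup D₂] [Module ℝ D₂] [FiniteDimensional ℝ D₂]
    [AddCommGroup Y₂] [Module ℝ Y₂] [FiniteDimensional ℝ Y₂]
    {X D Y : Type} [AddCommGroup X] [Module ℝ X] [FiniteDimensional ℝ X]
    [AddCommGroup D] [Module ℝ D] [FiniteDimensional ℝ D]
    [AddCommGroup Y] [Module ℝ Y] [FiniteDimensional ℝ Y]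
    (P : DVSystem X W D Y) (P₁ : DVSystem X₁ W D₁ Y₁) (P₂ : DVSystem X₂ W D₂ Y₂)
    (h₁ : Simulates P P₁) (h₂ : Simulates P P₂) :
    Simulates P (comp P₁ P₂) :=
  simulates_comp_of_simulates_general P P₁ P₂ h₁ h₂
end

section
/- Let Σ₁, Σ₂ be systems in driving variable form with the same external space W, and let V∘,* denote the consistent subspace of the composition Σ₁ ∘ Σ₂. Then π_{X₁}(V∘,*) ⊆ V₁* and π_{X₂}(V∘,*) ⊆ V₂*, i.e., the projection of the consistent subspace of the composition onto each factor is contained in the consistent subspace of the corresponding component system. -/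
open DVSystem

/-! Since `V*` is the largest admissible subspace, it suffices to show that the projection
of an admissible subspace of `Σ₁ ∘ Σ₂` is admissible for each factor. The projection
intertwines the block-diagonal dynamics, maps `im G∘` into `im Gᵢ`, and the constraint
`H∘ x = 0` contains `Hᵢ xᵢ = 0`. -/

namespace DVSystem

section Admissible

variable {X W D Y X' W' D' Y' : Type}
  [AddCommGroup X] [Module ℝ X] [AddCommGroup W] [Module ℝ W]
  [AddCommGroup D] [Module ℝ D] [AddCommGroup Y] [Module ℝ Y]
  [AddCommGroup X'] [Module ℝ X'] [AddCommGroup W'] [Module ℝ W']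
  [AddCommGroup D'] [Module ℝ D'] [AddCommGroup Y'] [Module ℝ Y']

theorem Admissible.le_V {P : DVSystem X W D Y} {U : Submodule ℝ X} (hU : P.Admissible U) :
    U ≤ P.V :=
  le_sSup hU

theorem admissible_V_s13 (P : DVSystem X W D Y) : P.Admissible P.V := by
  constructor
  · refine Submodule.map_le_iff_le_comap.mpr (sSup_le fun U hU ↦ ?_)
    exact Submodule.map_le_iff_le_comap.mp (hU.1.trans (sup_le_sup_right hU.le_V _))
  · exact sSup_le fun U hU ↦ hU.2

theorem Admissible.map {P : DVSystem X W D Y} {P' : DVSystem X' W' D' Y'} {U : Submodule ℝ X}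
    (hU : P.Admissible U) (f : X →ₗ[ℝ] X') (hA : f ∘ₗ P.A = P'.A ∘ₗ f)
    (hG : LinearMap.range (f ∘ₗ P.G) ≤ LinearMap.range P'.G)
    (hH : LinearMap.ker P.H ≤ LinearMap.ker (P'.H ∘ₗ f)) :
    P'.Admissible (U.map f) := by
  constructor
  · calc (U.map f).map P'.A = (U.map P.A).map f := by
          rw [← Submodule.map_comp, ← Submodule.map_comp, hA]
      _ ≤ (U ⊔ LinearMap.range P.G).map f := Submodule.map_mono hU.1
      _ = U.map f ⊔ LinearMap.range (f ∘ₗ P.G) := by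
          rw [Submodule.map_sup, LinearMap.range_comp]
      _ ≤ U.map f ⊔ LinearMap.range P'.G := sup_le_sup_left hG _
  · rw [Submodule.map_le_iff_le_comap, ← LinearMap.ker_comp]
    exact hU.2.trans hH

end Admissible

section comp

variable {W : Type} [AddCommGroup W] [Module ℝ W]
  {X₁ D₁ Y₁ : Type} [AddCommGroup X₁] [Module ℝ X₁]
  [AddCommGroup D₁] [Module ℝ D₁] [AddCommGroup Y₁] [Module ℝ Y₁]
  {X₂ D₂ Y₂ : Type} [AddCommGroup X₂] [Module ℝ X₂]
  [AddCommGroup D₂] [Module ℝ D₂] [AddCommGroup Y₂] [Module ℝ Y₂]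
  {P₁ : DVSystem X₁ W D₁ Y₁} {P₂ : DVSystem X₂ W D₂ Y₂} {U : Submodule ℝ (X₁ × X₂)}

theorem Admissible.map_fst (hU : (comp P₁ P₂).Admissible U) :
    P₁.Admissible (U.map (LinearMap.fst ℝ X₁ X₂)) := by
  refine hU.map _ rfl ?_ fun x hx ↦ ?_
  · rintro _ ⟨d, rfl⟩
    exact ⟨d.1, rfl⟩
  · exact congrArg Prod.fst (LinearMap.mem_ker.mp hx)

theorem Admissible.map_snd (hU : (comp P₁ P₂).Admissible U) :
    P₂.Admissible (U.map (LinearMap.snd ℝ X₁ X₂)) := by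
  refine hU.map _ rfl ?_ fun x hx ↦ ?_
  · rintro _ ⟨d, rfl⟩
    exact ⟨d.2, rfl⟩
  · exact congrArg (·.2.1) (LinearMap.mem_ker.mp hx)

end comp

end DVSystem

theorem comp_consistent_proj_le_general {W : Type} [AddCommGroup W] [Module ℝ W]
    {X₁ D₁ Y₁ : Type} [AddCommGroup X₁] [Module ℝ X₁]
    [AddCommGroup D₁] [Module ℝ D₁]
    [AddCommGroup Y₁] [Module ℝ Y₁]
    {X₂ D₂ Y₂ : Type} [AddCommGroup X₂] [Module ℝ X₂]
    [AddCommGroup D₂] [Module ℝ D₂]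
    [AddCommGroup Y₂] [Module ℝ Y₂]
    (P₁ : DVSystem X₁ W D₁ Y₁) (P₂ : DVSystem X₂ W D₂ Y₂) :
    ((comp P₁ P₂).V).map (LinearMap.fst ℝ X₁ X₂) ≤ P₁.V ∧
    ((comp P₁ P₂).V).map (LinearMap.snd ℝ X₁ X₂) ≤ P₂.V :=
  ⟨(comp P₁ P₂).admissible_V_s13.map_fst.le_V, (comp P₁ P₂).admissible_V_s13.map_snd.le_V⟩

/-- The projections of the consistent subspace of `Σ₁ ∘ Σ₂` are contained in the
consistent subspaces of the components. -/
theorem comp_consistent_proj_le {W : Type} [AddCommGroup W] [Module ℝ W] [FiniteDimensional ℝ W]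
    {X₁ D₁ Y₁ : Type} [AddCommGroup X₁] [Module ℝ X₁] [FiniteDimensional ℝ X₁]
    [AddCommGroup D₁] [Module ℝ D₁] [FiniteDimensional ℝ D₁]
    [AddCommGroup Y₁] [Module ℝ Y₁] [FiniteDimensional ℝ Y₁]
    {X₂ D₂ Y₂ : Type} [AddCommGroup X₂] [Module ℝ X₂] [FiniteDimensional ℝ X₂]
    [AddCommGroup D₂] [Module ℝ D₂] [FiniteDimensional ℝ D₂]
    [AddCommGroup Y₂] [Module ℝ Y₂] [FiniteDimensional ℝ Y₂]
    (P₁ : DVSystem X₁ W D₁ Y₁) (P₂ : DVSystem X₂ W D₂ Y₂) :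
    ((comp P₁ P₂).V).map (LinearMap.fst ℝ X₁ X₂) ≤ P₁.V ∧
    ((comp P₁ P₂).V).map (LinearMap.snd ℝ X₁ X₂) ≤ P₂.V :=
  comp_consistent_proj_le_general P₁ P₂
end
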